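/- arXiv:0911.4725 — 3 statements merged into one kernel-verified Lean document; each statement's English description precedes it below -/
import Mathlib

section
/- With the notation of the context, define for t ∈ ℕ the function φ_t(x) = p_t(‖x‖) ‖x‖^{β₀} e^{−‖x‖^a / a} on ℝᵐ \ {0}. Then for every t and every x ≠ 0: Σ_{i=1}^m D_i(D_i φ_t)(x) = (1+c)² ‖x‖^a φ_t(x) − (1+c)² ( γ₀ + 2 a t ) φ_t(x). (The harmonic-oscillator eigenvalue equation (D² − (1+c)² x_a²) φ_{2t,0} = (1+c)²(γ₀ + 2at) φ_{2t,0} in componentwise scalar form, for k = 0 and spherical monogenic of degree ℓ = 0.) -/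
open Real RealInnerProductSpace

/-- `i`-th partial derivative of a scalar function on Euclidean space. -/
noncomputable def pd {m : ℕ} (i : Fin m) (f : EuclideanSpace ℝ (Fin m) → ℝ)
    (x : EuclideanSpace ℝ (Fin m)) : ℝ :=
  fderiv ℝ f x (EuclideanSpace.single i 1)

/-- Euler operator `E f (x) = ∑ j, x j * ∂_j f (x)`. -/
noncomputable def euler {m : ℕ} (f : EuclideanSpace ℝ (Fin m) → ℝ)
    (x : EuclideanSpace ℝ (Fin m)) : ℝ :=
  ∑ j, x j * pd j f x

/-- Components `D_i` of the deformed Dirac operator (trivial multiplicity `k = 0`). -/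
noncomputable def Dop {m : ℕ} (a b c : ℝ) (i : Fin m)
    (f : EuclideanSpace ℝ (Fin m) → ℝ) (x : EuclideanSpace ℝ (Fin m)) : ℝ :=
  ‖x‖ ^ (1 - a / 2) * pd i f x + b * ‖x‖ ^ (-(a / 2) - 1) * x i * f x
    + c * ‖x‖ ^ (-(a / 2) - 1) * x i * euler f x

/-- `β₀ = -b/(1+c)`. -/
noncomputable def beta0 (b c : ℝ) : ℝ := -b / (1 + c)

/-- `γ₀ = a/2 + (m-1)/(1+c)`. -/
noncomputable def gamma0 (m : ℕ) (a c : ℝ) : ℝ := a / 2 + ((m : ℝ) - 1) / (1 + c)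

/-- The radial polynomial
`p_t(r) = Σ_{i=0}^t 2^{2t}(1+c)^{2t} C(t,i) (Γ(γ/a+t)/Γ(γ/a+i)) (a/2)^{t-i} (-1)^i r^{a i}`. -/
noncomputable def lagP (a c γ : ℝ) (t : ℕ) (r : ℝ) : ℝ :=
  ∑ i ∈ Finset.range (t + 1),
    2 ^ (2 * t) * (1 + c) ^ (2 * t) * (t.choose i : ℝ)
      * (Real.Gamma (γ / a + t) / Real.Gamma (γ / a + i))
      * (a / 2) ^ (t - i) * (-1 : ℝ) ^ i * r ^ (a * i)

/-- The radial polynomial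
`q_t(r) = Σ_{i=0}^t 2^{2t+1}(1+c)^{2t+1} C(t,i) (Γ(γ/a+t+1)/Γ(γ/a+i+1)) (a/2)^{t-i} (-1)^i r^{a i}`. -/
noncomputable def lagQ (a c γ : ℝ) (t : ℕ) (r : ℝ) : ℝ :=
  ∑ i ∈ Finset.range (t + 1),
    2 ^ (2 * t + 1) * (1 + c) ^ (2 * t + 1) * (t.choose i : ℝ)
      * (Real.Gamma (γ / a + t + 1) / Real.Gamma (γ / a + i + 1))
      * (a / 2) ^ (t - i) * (-1 : ℝ) ^ i * r ^ (a * i)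

/-- The generalized Laguerre function `φ_t(x) = p_t(‖x‖) ‖x‖^{β₀} e^{-‖x‖^a/a}`. -/
noncomputable def lagPhi (m : ℕ) (a b c : ℝ) (t : ℕ) (x : EuclideanSpace ℝ (Fin m)) : ℝ :=
  lagP a c (gamma0 m a c) t ‖x‖ * ‖x‖ ^ beta0 b c * Real.exp (-‖x‖ ^ a / a)

lemma hasFDerivAt_norm_eucl {m : ℕ} (x : EuclideanSpace ℝ (Fin m)) (hx : x ≠ 0) :
    HasFDerivAt (fun y : EuclideanSpace ℝ (Fin m) => ‖y‖) (‖x‖⁻¹ • (innerSL ℝ x)) x := by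
  have h0 : (0:ℝ) < ‖x‖ := norm_pos_iff.mpr hx
  have hii : ⟪x, x⟫ = ‖x‖ * ‖x‖ := real_inner_self_eq_norm_mul_norm x
  have hinner := (hasFDerivAt_id x).inner ℝ (hasFDerivAt_id (𝕜 := ℝ) x)
  simp only [id_eq, id] at hinner
  have hsq : HasDerivAt Real.sqrt (1/(2*Real.sqrt (⟪x,x⟫))) ⟪x,x⟫ :=
    Real.hasDerivAt_sqrt (by rw [hii]; positivity)
  have h2 := hsq.comp_hasFDerivAt (f := fun y : EuclideanSpace ℝ (Fin m) => (⟪y,y⟫:ℝ)) x hinner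
  have heq : (fun y : EuclideanSpace ℝ (Fin m) => ‖y‖)
      = Real.sqrt ∘ (fun y : EuclideanSpace ℝ (Fin m) => (⟪y,y⟫:ℝ)) := by
    funext y
    simp only [Function.comp_apply]
    rw [real_inner_self_eq_norm_mul_norm, Real.sqrt_mul_self (norm_nonneg y)]
  rw [heq]
  refine h2.congr_fderiv ?_
  ext v
  simp [hii, Real.sqrt_mul_self (norm_nonneg x), real_inner_comm x v]
  ring

lemma hasFDerivAt_radial {m : ℕ} {g : ℝ → ℝ} {g' : ℝ} (x : EuclideanSpace ℝ (Fin m))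
    (hx : x ≠ 0) (hg : HasDerivAt g g' ‖x‖) :
    HasFDerivAt (fun y : EuclideanSpace ℝ (Fin m) => g ‖y‖)
      (g' • (‖x‖⁻¹ • (innerSL ℝ x))) x :=
  hg.comp_hasFDerivAt (f := fun y : EuclideanSpace ℝ (Fin m) => ‖y‖) x
    (hasFDerivAt_norm_eucl x hx)

lemma pd_radial {m : ℕ} {g : ℝ → ℝ} {g' : ℝ} (x : EuclideanSpace ℝ (Fin m))
    (hx : x ≠ 0) (hg : HasDerivAt g g' ‖x‖) (i : Fin m) :
    pd i (fun y => g ‖y‖) x = g' * x i / ‖x‖ := by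
  unfold pd
  rw [(hasFDerivAt_radial x hx hg).fderiv]
  simp [EuclideanSpace.inner_single_right, real_inner_comm]
  ring

lemma pd_coord_radial {m : ℕ} {g : ℝ → ℝ} {g' : ℝ} (x : EuclideanSpace ℝ (Fin m))
    (hx : x ≠ 0) (hg : HasDerivAt g g' ‖x‖) (i j : Fin m) :
    pd j (fun y => y i * g ‖y‖) x
      = (if i = j then 1 else 0) * g ‖x‖ + x i * (g' * x j / ‖x‖) := by
  unfold pd
  have h1 : HasFDerivAt (fun y : EuclideanSpace ℝ (Fin m) => y i)
      (EuclideanSpace.proj (𝕜 := ℝ) i) x := (EuclideanSpace.proj (𝕜 := ℝ) i).hasFDerivAt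
  have h2 := h1.fun_mul (hasFDerivAt_radial x hx hg)
  rw [h2.fderiv]
  simp [EuclideanSpace.inner_single_right, real_inner_comm, EuclideanSpace.single_apply]
  rcases eq_or_ne i j with h | h
  · simp [h]; ring
  · simp [h, div_eq_mul_inv, mul_comm, mul_assoc, mul_left_comm]

lemma norm_sq_eq {m : ℕ} (x : EuclideanSpace ℝ (Fin m)) : ∑ j, x j * x j = ‖x‖ * ‖x‖ := by
  rw [← real_inner_self_eq_norm_mul_norm]
  rfl

lemma euler_radial {m : ℕ} {g : ℝ → ℝ} {g' : ℝ} (x : EuclideanSpace ℝ (Fin m))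
    (hx : x ≠ 0) (hg : HasDerivAt g g' ‖x‖) :
    euler (fun y => g ‖y‖) x = g' * ‖x‖ := by
  have h0 : (0:ℝ) < ‖x‖ := norm_pos_iff.mpr hx
  unfold euler
  have : ∀ j, x j * pd j (fun y => g ‖y‖) x = (g' / ‖x‖) * (x j * x j) := by
    intro j; rw [pd_radial x hx hg]; ring
  rw [Finset.sum_congr rfl fun j _ => this j, ← Finset.mul_sum, norm_sq_eq]
  field_simp

lemma euler_coord_radial {m : ℕ} {g : ℝ → ℝ} {g' : ℝ} (x : EuclideanSpace ℝ (Fin m))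
    (hx : x ≠ 0) (hg : HasDerivAt g g' ‖x‖) (i : Fin m) :
    euler (fun y => y i * g ‖y‖) x = x i * (g ‖x‖ + g' * ‖x‖) := by
  have h0 : (0:ℝ) < ‖x‖ := norm_pos_iff.mpr hx
  unfold euler
  have : ∀ j, x j * pd j (fun y => y i * g ‖y‖) x
      = x j * (if i = j then 1 else 0) * g ‖x‖ + (x i * g' / ‖x‖) * (x j * x j) := by
    intro j; rw [pd_coord_radial x hx hg]; ring
  rw [Finset.sum_congr rfl fun j _ => this j, Finset.sum_add_distrib, ← Finset.mul_sum,
    norm_sq_eq]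
  have : ∑ j, x j * (if i = j then 1 else 0) * g ‖x‖ = x i * g ‖x‖ := by
    rw [Finset.sum_eq_single i] <;> simp +contextual [eq_comm]
  rw [this]
  field_simp


noncomputable def Aco (a c γ : ℝ) (t i : ℕ) : ℝ :=
  2 ^ (2 * t) * (1 + c) ^ (2 * t) * (t.choose i : ℝ)
    * (Real.Gamma (γ / a + t) / Real.Gamma (γ / a + i))
    * (a / 2) ^ (t - i) * (-1 : ℝ) ^ i

lemma Aco_rec {a c γ : ℝ} (ha : 0 < a) (hν : 0 < γ / a) {t i : ℕ} (hi : i < t) :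
    Aco a c γ t (i + 1) * (a * (i + 1)) * (a * (i + 1) + γ - a)
      = 2 * Aco a c γ t i * (a * i - a * t) := by
  set ν := γ / a with hν'
  have hγ : γ = a * ν := by rw [hν']; field_simp
  have hνi : (0:ℝ) < ν + i := by positivity
  have hΓpos : 0 < Real.Gamma (ν + i) := Real.Gamma_pos_of_pos hνi
  have hΓ : Real.Gamma (ν + (i + 1 : ℕ)) = (ν + i) * Real.Gamma (ν + i) := by
    push_cast
    rw [show ν + ((i : ℝ) + 1) = (ν + i) + 1 by ring, Real.Gamma_add_one hνi.ne']
  have hch : (t.choose (i+1) : ℝ) * (i + 1) = (t.choose i : ℝ) * ((t : ℝ) - i) := by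
    have := Nat.choose_succ_right_eq t i
    have h2 : ((t.choose (i+1) * (i+1) : ℕ) : ℝ) = ((t.choose i * (t - i) : ℕ) : ℝ) := by
      norm_cast
    push_cast [Nat.cast_sub hi.le] at h2
    exact_mod_cast h2
  have hts : t - i = (t - (i + 1)) + 1 := by omega
  unfold Aco
  rw [hΓ, hts, pow_succ, pow_succ]
  have hchoose : (t.choose (i+1) : ℝ) = (t.choose i : ℝ) * ((t:ℝ) - i) / ((i:ℝ) + 1) := by
    field_simp
    linarith [hch]
  rw [hchoose, hγ]
  have hi1 : ((i:ℝ) + 1) ≠ 0 := by positivity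
  field_simp
  ring

lemma lagP_eq (a c γ : ℝ) (t : ℕ) (r : ℝ) :
    lagP a c γ t r = ∑ i ∈ Finset.range (t + 1), Aco a c γ t i * r ^ (a * i) := rfl

noncomputable def lagPd (a c γ : ℝ) (t : ℕ) (r : ℝ) : ℝ :=
  ∑ i ∈ Finset.range (t + 1), Aco a c γ t i * ((a * i) * r ^ (a * i - 1))

noncomputable def lagPdd (a c γ : ℝ) (t : ℕ) (r : ℝ) : ℝ :=
  ∑ i ∈ Finset.range (t + 1), Aco a c γ t i * ((a * i) * ((a * i - 1) * r ^ (a * i - 2)))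

lemma hasDerivAt_lagP {a c γ r : ℝ} (hr : 0 < r) (t : ℕ) :
    HasDerivAt (lagP a c γ t) (lagPd a c γ t r) r := by
  have : ∀ s : ℝ, lagP a c γ t s = ∑ i ∈ Finset.range (t+1), Aco a c γ t i * s ^ (a * i) :=
    fun s => lagP_eq a c γ t s
  rw [funext this]
  exact HasDerivAt.fun_sum fun i _ =>
    ((Real.hasDerivAt_rpow_const (Or.inl hr.ne')).const_mul _)

lemma hasDerivAt_lagPd {a c γ r : ℝ} (hr : 0 < r) (t : ℕ) :
    HasDerivAt (lagPd a c γ t) (lagPdd a c γ t r) r := by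
  unfold lagPd lagPdd
  refine HasDerivAt.fun_sum fun i _ => ?_
  have h := ((Real.hasDerivAt_rpow_const (p := a * i - 1)
    (Or.inl hr.ne'))).const_mul (a * (i:ℝ))
  have h2 := h.const_mul (Aco a c γ t i)
  refine h2.congr_deriv ?_
  ring_nf

lemma key {a c γ : ℝ} (ha : 0 < a) (hν : 0 < γ / a) {r : ℝ} (hr : 0 < r) (t : ℕ) :
    r * (r * lagPdd a c γ t r) + (γ - a + 1) * (r * lagPd a c γ t r)
      - 2 * (r ^ a * (r * lagPd a c γ t r)) + 2 * a * t * (r ^ a * lagP a c γ t r) = 0 := by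
  have hrne := hr.ne'
  have e_pdd : r * (r * lagPdd a c γ t r)
      = ∑ i ∈ Finset.range (t+1), Aco a c γ t i * ((a*i) * ((a*i-1) * r ^ (a*i))) := by
    unfold lagPdd
    rw [Finset.mul_sum, Finset.mul_sum]
    refine Finset.sum_congr rfl fun i _ => ?_
    rw [show a*(i:ℝ) = (a*i-2) + 1 + 1 by ring, Real.rpow_add_one hrne, Real.rpow_add_one hrne]
    ring
  have e_pd : r * lagPd a c γ t r
      = ∑ i ∈ Finset.range (t+1), Aco a c γ t i * ((a*i) * r ^ (a*i)) := by
    unfold lagPd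
    rw [Finset.mul_sum]
    refine Finset.sum_congr rfl fun i _ => ?_
    rw [show a*(i:ℝ) = (a*i-1) + 1 by ring, Real.rpow_add_one hrne]
    ring
  have e_mul : ∀ (q : ℝ), r ^ a * r ^ q = r ^ (q + a) := fun q => by
    rw [Real.rpow_add hr]; ring
  have total : r * (r * lagPdd a c γ t r) + (γ - a + 1) * (r * lagPd a c γ t r)
      - 2 * (r ^ a * (r * lagPd a c γ t r)) + 2 * a * t * (r ^ a * lagP a c γ t r)
      = ∑ i ∈ Finset.range (t+1), ((Aco a c γ t i * (a*i) * (a*i + γ - a)) * r ^ (a*i)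
          - (2 * Aco a c γ t i * (a*i - a*t)) * r ^ (a*i + a)) := by
    rw [e_pdd, e_pd, lagP_eq]
    simp only [Finset.mul_sum, ← Finset.sum_add_distrib, ← Finset.sum_sub_distrib]
    refine Finset.sum_congr rfl fun i _ => ?_
    rw [← e_mul]
    ring
  rw [total, Finset.sum_sub_distrib, sub_eq_zero]
  rw [Finset.sum_range_succ' (fun i => (Aco a c γ t i * (a*i) * (a*i + γ - a)) * r ^ (a*(i:ℕ)))]
  rw [Finset.sum_range_succ (fun i => (2 * Aco a c γ t i * (a*i - a*t)) * r ^ (a*(i:ℕ) + a))]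
  simp only [Nat.cast_zero, mul_zero, zero_mul, add_zero, sub_self, zero_add]
  refine Finset.sum_congr rfl fun i hi => ?_
  have hi' : i < t := Finset.mem_range.mp hi
  have hexp : r ^ (a * ((i:ℕ)+1 : ℕ)) = r ^ (a * (i:ℕ) + a) := by
    congr 1
    push_cast
    ring
  rw [hexp]
  push_cast
  rw [Aco_rec ha hν hi']

noncomputable def expE (a r : ℝ) : ℝ := Real.exp (-r ^ a / a)

lemma hasDerivAt_expE {a r : ℝ} (ha : 0 < a) (hr : 0 < r) :
    HasDerivAt (expE a) (expE a r * -r ^ (a - 1)) r := by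
  have h1 : HasDerivAt (fun s : ℝ => -s ^ a / a) (-(a * r ^ (a - 1)) / a) r :=
    ((Real.hasDerivAt_rpow_const (Or.inl hr.ne')).neg).div_const a
  have h2 := h1.exp
  unfold expE
  convert h2 using 1
  field_simp

noncomputable def Gph (m : ℕ) (a b c : ℝ) (t : ℕ) (r : ℝ) : ℝ :=
  lagP a c (gamma0 m a c) t r * r ^ beta0 b c * expE a r

noncomputable def Gd (m : ℕ) (a b c : ℝ) (t : ℕ) (r : ℝ) : ℝ :=
  (lagPd a c (gamma0 m a c) t r * r ^ beta0 b c
      + lagP a c (gamma0 m a c) t r * (beta0 b c * r ^ (beta0 b c - 1))) * expE a r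
    + lagP a c (gamma0 m a c) t r * r ^ beta0 b c * (expE a r * -r ^ (a - 1))

lemma hasDerivAt_Gph {m : ℕ} {a b c : ℝ} {t : ℕ} {r : ℝ} (ha : 0 < a) (hr : 0 < r) :
    HasDerivAt (Gph m a b c t) (Gd m a b c t r) r := by
  exact ((hasDerivAt_lagP hr t).mul
      (Real.hasDerivAt_rpow_const (Or.inl hr.ne'))).mul (hasDerivAt_expE ha hr)

noncomputable def Uu (a c γ : ℝ) (t : ℕ) (r : ℝ) : ℝ :=
  r * lagPd a c γ t r - r ^ a * lagP a c γ t r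

noncomputable def Ud (a c γ : ℝ) (t : ℕ) (r : ℝ) : ℝ :=
  (1 * lagPd a c γ t r + r * lagPdd a c γ t r)
    - (a * r ^ (a - 1) * lagP a c γ t r + r ^ a * lagPd a c γ t r)

lemma hasDerivAt_Uu {a c γ : ℝ} {t : ℕ} {r : ℝ} (hr : 0 < r) :
    HasDerivAt (Uu a c γ t) (Ud a c γ t r) r := by
  exact ((hasDerivAt_id r).mul (hasDerivAt_lagPd hr t)).sub
    ((Real.hasDerivAt_rpow_const (Or.inl hr.ne')).mul (hasDerivAt_lagP hr t))

noncomputable def sig (a b c : ℝ) : ℝ := beta0 b c - a / 2 - 1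

noncomputable def Hh (m : ℕ) (a b c : ℝ) (t : ℕ) (r : ℝ) : ℝ :=
  (1 + c) * Uu a c (gamma0 m a c) t r * r ^ sig a b c * expE a r

noncomputable def Hd (m : ℕ) (a b c : ℝ) (t : ℕ) (r : ℝ) : ℝ :=
  ((1 + c) * Ud a c (gamma0 m a c) t r * r ^ sig a b c
      + (1 + c) * Uu a c (gamma0 m a c) t r * (sig a b c * r ^ (sig a b c - 1))) * expE a r
    + (1 + c) * Uu a c (gamma0 m a c) t r * r ^ sig a b c * (expE a r * -r ^ (a - 1))

lemma hasDerivAt_Hh {m : ℕ} {a b c : ℝ} {t : ℕ} {r : ℝ} (ha : 0 < a) (hr : 0 < r) :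
    HasDerivAt (Hh m a b c t) (Hd m a b c t r) r := by
  exact ((((hasDerivAt_Uu hr).const_mul (1 + c)).mul
      (Real.hasDerivAt_rpow_const (Or.inl hr.ne'))).mul (hasDerivAt_expE ha hr))

lemma step1 {m : ℕ} {a b c : ℝ} {t : ℕ} {r : ℝ} (ha : 0 < a) (hc : 0 < 1 + c) (hr : 0 < r) :
    r ^ (1 - a / 2) * (Gd m a b c t r / r) + b * r ^ (-(a / 2) - 1) * Gph m a b c t r
      + c * r ^ (-(a / 2) - 1) * (Gd m a b c t r * r) = Hh m a b c t r := by
  have hrne := hr.ne'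
  unfold Gd Gph Hh Uu sig
  set β := beta0 b c with hβ
  have hb : b = -((1 + c) * β) := by rw [hβ]; unfold beta0; field_simp
  set E := expE a r with hE
  set X := r ^ (a / 2) with hX
  have hXpos : 0 < X := by rw [hX]; positivity
  have hXne := hXpos.ne'
  have f1 : r ^ (1 - a / 2) = r / X := by
    rw [eq_div_iff hXne, hX, ← Real.rpow_add hr]
    norm_num
  have f2 : r ^ (β - 1) = r ^ β / r := by
    rw [eq_div_iff hrne, ← Real.rpow_add_one hrne]
    congr 1; ring
  have f3 : r ^ (-(a / 2) - 1) = 1 / (X * r) := by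
    rw [eq_div_iff (by positivity), hX, ← mul_assoc, ← Real.rpow_add hr, ← Real.rpow_add_one hrne]
    rw [show -(a/2) - 1 + a/2 + 1 = (0:ℝ) by ring, Real.rpow_zero]
  have f4 : r ^ (a - 1) = X * X / r := by
    rw [eq_div_iff hrne, ← Real.rpow_add_one hrne, hX, ← Real.rpow_add hr]
    congr 1; ring
  have f5 : r ^ (β - a / 2 - 1) = r ^ β / (X * r) := by
    rw [eq_div_iff (by positivity), hX, ← mul_assoc, ← Real.rpow_add hr, ← Real.rpow_add_one hrne]
    congr 1; ring
  have f7 : r ^ a = X * X := by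
    rw [hX, ← Real.rpow_add hr]
    congr 1; ring
  rw [f1, f2, f3, f4, f5, f7, hb]
  clear_value β E X
  field_simp
  ring

lemma step2 {m : ℕ} {a b c : ℝ} {t : ℕ} {r : ℝ} (hm : 1 ≤ m) (ha : 0 < a) (hc : 0 < 1 + c)
    (hr : 0 < r) :
    (m : ℝ) * (r ^ (1 - a / 2) * Hh m a b c t r)
      + (r * r) * (r ^ (1 - a / 2) * Hd m a b c t r / r
          + b * r ^ (-(a / 2) - 1) * Hh m a b c t r
          + c * r ^ (-(a / 2) - 1) * (Hh m a b c t r + Hd m a b c t r * r))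
      = (1 + c) ^ 2 * r ^ a * Gph m a b c t r
        - (1 + c) ^ 2 * (gamma0 m a c + 2 * a * t) * Gph m a b c t r := by
  have hrne := hr.ne'
  set γ := gamma0 m a c with hγ
  have hm1 : (0:ℝ) ≤ (m : ℝ) - 1 := by
    have : (1:ℝ) ≤ (m:ℝ) := by exact_mod_cast hm
    linarith
  have hγpos : 0 < γ := by
    rw [hγ]; unfold gamma0
    have := div_nonneg hm1 hc.le
    linarith
  have hν : 0 < γ / a := div_pos hγpos ha
  have hm' : (m : ℝ) = (1 + c) * (γ - a / 2) + 1 := by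
    rw [hγ]; unfold gamma0; field_simp; ring
  have key' := key (c := c) ha hν hr t
  unfold Hh Hd Gph Uu Ud sig
  rw [← hγ]
  set β := beta0 b c with hβ
  have hb : b = -((1 + c) * β) := by rw [hβ]; unfold beta0; field_simp
  set E := expE a r with hE
  set X := r ^ (a / 2) with hX
  have hXpos : 0 < X := by rw [hX]; positivity
  have hXne := hXpos.ne'
  have f1 : r ^ (1 - a / 2) = r / X := by
    rw [eq_div_iff hXne, hX, ← Real.rpow_add hr]
    norm_num
  have f3 : r ^ (-(a / 2) - 1) = 1 / (X * r) := by
    rw [eq_div_iff (by positivity), hX, ← mul_assoc, ← Real.rpow_add hr, ← Real.rpow_add_one hrne]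
    rw [show -(a/2) - 1 + a/2 + 1 = (0:ℝ) by ring, Real.rpow_zero]
  have f4 : r ^ (a - 1) = X * X / r := by
    rw [eq_div_iff hrne, ← Real.rpow_add_one hrne, hX, ← Real.rpow_add hr]
    congr 1; ring
  have f5 : r ^ (β - a / 2 - 1) = r ^ β / (X * r) := by
    rw [eq_div_iff (by positivity), hX, ← mul_assoc, ← Real.rpow_add hr, ← Real.rpow_add_one hrne]
    congr 1; ring
  have f6 : r ^ (β - a / 2 - 1 - 1) = r ^ β / (X * r * r) := by
    rw [eq_div_iff (by positivity), hX, ← mul_assoc, ← mul_assoc, ← Real.rpow_add hr,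
      ← Real.rpow_add_one hrne, ← Real.rpow_add_one hrne]
    congr 1; ring
  have f7 : r ^ a = X * X := by
    rw [hX, ← Real.rpow_add hr]
    congr 1; ring
  rw [f7] at key'
  rw [hm', f1, f3, f4, f5, f6, f7, hb]
  clear_value γ β E X
  field_simp
  linear_combination (2 * (1 + c) * E) * key'

theorem stmt_12 (m : ℕ) (hm : 1 ≤ m) (a b c : ℝ) (ha : 0 < a) (hc : 0 < 1 + c)
    (t : ℕ) (x : EuclideanSpace ℝ (Fin m)) (hx : x ≠ 0) :
    ∑ i, Dop a b c i (Dop a b c i (lagPhi m a b c t)) x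
      = (1 + c) ^ 2 * ‖x‖ ^ a * lagPhi m a b c t x
        - (1 + c) ^ 2 * (gamma0 m a c + 2 * a * t) * lagPhi m a b c t x := by
  classical
  have hr : (0:ℝ) < ‖x‖ := norm_pos_iff.mpr hx
  have hphi : lagPhi m a b c t = fun y : EuclideanSpace ℝ (Fin m) => Gph m a b c t ‖y‖ := rfl
  have hD1 : ∀ y : EuclideanSpace ℝ (Fin m), y ≠ 0 → ∀ i : Fin m,
      Dop a b c i (lagPhi m a b c t) y = y i * Hh m a b c t ‖y‖ := by
    intro y hy i
    have hry : (0:ℝ) < ‖y‖ := norm_pos_iff.mpr hy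
    have hgd : HasDerivAt (Gph m a b c t) (Gd m a b c t ‖y‖) ‖y‖ := hasDerivAt_Gph ha hry
    simp only [hphi]
    unfold Dop
    rw [pd_radial y hy hgd i, euler_radial y hy hgd]
    have hs := step1 (m := m) (t := t) (b := b) ha hc hry
    linear_combination (y i) * hs
  have hDcongr : ∀ (i : Fin m) (f F : EuclideanSpace ℝ (Fin m) → ℝ), f =ᶠ[nhds x] F →
      Dop a b c i f x = Dop a b c i F x := by
    intro i f F h
    unfold Dop euler pd
    rw [h.fderiv_eq, h.self_of_nhds]
  have hD2 : ∀ i : Fin m, Dop a b c i (Dop a b c i (lagPhi m a b c t)) x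
      = ‖x‖ ^ (1 - a/2) * Hh m a b c t ‖x‖
        + (x i * x i) * (‖x‖ ^ (1 - a/2) * Hd m a b c t ‖x‖ / ‖x‖
            + b * ‖x‖ ^ (-(a/2) - 1) * Hh m a b c t ‖x‖
            + c * ‖x‖ ^ (-(a/2) - 1) * (Hh m a b c t ‖x‖ + Hd m a b c t ‖x‖ * ‖x‖)) := by
    intro i
    have hco : HasDerivAt (Hh m a b c t) (Hd m a b c t ‖x‖) ‖x‖ := hasDerivAt_Hh ha hr
    have heq : Dop a b c i (lagPhi m a b c t)
        =ᶠ[nhds x] (fun y => y i * Hh m a b c t ‖y‖) := by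
      filter_upwards [IsOpen.mem_nhds isOpen_compl_singleton hx] with y hy
      exact hD1 y hy i
    rw [hDcongr i _ _ heq]
    unfold Dop
    rw [pd_coord_radial x hx hco i i, euler_coord_radial x hx hco i]
    simp only [eq_self_iff_true, if_true]
    ring
  rw [Finset.sum_congr rfl fun i _ => hD2 i]
  rw [Finset.sum_add_distrib, Finset.sum_const, ← Finset.sum_mul, norm_sq_eq]
  simp only [Finset.card_univ, Fintype.card_fin, nsmul_eq_mul]
  have hs2 := step2 (a := a) (b := b) (c := c) (t := t) hm ha hc hr
  have hlag : lagPhi m a b c t x = Gph m a b c t ‖x‖ := rfl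
  rw [hlag]
  linear_combination hs2
end

section
/- With the notation of the context, define for t ∈ ℕ the function φ_t(x) = p_t(‖x‖) ‖x‖^{β₀} e^{−‖x‖^a / a} and the weight h(x) = ‖x‖^{ a/2 + (2b − 1 − c m)/(1+c) }. Then for all s, t ∈ ℕ with s ≠ t, ∫_{ℝᵐ} φ_t(x) φ_s(x) h(x) dx = 0, and for every t, ∫_{ℝᵐ} φ_t(x)² h(x) dx = (2 π^{m/2} / Γ(m/2)) · (1/a) (2a)^{2t} (1+c)^{4t} t! Γ(γ₀/a + t) (a/2)^{γ₀/a}. (Orthogonality relations of the generalized Clifford–Laguerre functions, for k = 0 and spherical monogenic of degree ℓ = 0.) -/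
open Real

open MeasureTheory

open Polynomial Finset Set


noncomputable def fdS (n : ℕ) (p : Polynomial ℝ) : ℝ :=
  ∑ j ∈ Finset.range (n + 1), (-1 : ℝ) ^ j * (n.choose j : ℝ) * p.eval (j : ℝ)

lemma fdS_add (n : ℕ) (p q : Polynomial ℝ) : fdS n (p + q) = fdS n p + fdS n q := by
  simp [fdS, mul_add, Finset.sum_add_distrib]

lemma fdS_C_mul (n : ℕ) (c : ℝ) (p : Polynomial ℝ) : fdS n (Polynomial.C c * p) = c * fdS n p := by
  simp only [fdS, eval_mul, eval_C, Finset.mul_sum]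
  exact Finset.sum_congr rfl fun j _ => by ring

lemma fdS_succ (n : ℕ) (p : Polynomial ℝ) :
    fdS (n + 1) p = - fdS n (p.comp (X + Polynomial.C 1) - p) := by
  have hsub : fdS n (p.comp (X + Polynomial.C 1) - p)
      = fdS n (p.comp (X + Polynomial.C 1)) - fdS n p := by
    simp [fdS, mul_sub, Finset.sum_sub_distrib]
  rw [hsub]
  have hg : ∑ j ∈ Finset.range (n + 2), (-1 : ℝ) ^ j * (n.choose j : ℝ) * p.eval (j : ℝ)
      = fdS n p := by
    rw [Finset.sum_range_succ]
    simp [fdS, Nat.choose_succ_self]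
  have hg' : ∑ i ∈ Finset.range (n + 1),
      (-1 : ℝ) ^ (i+1) * (n.choose (i+1) : ℝ) * p.eval ((i:ℝ) + 1)
      = fdS n p - p.eval 0 := by
    have := Finset.sum_range_succ' (fun j => (-1 : ℝ) ^ j * (n.choose j : ℝ) * p.eval (j : ℝ)) (n + 1)
    rw [hg] at this
    push_cast at this ⊢
    simp only [pow_zero, Nat.choose_zero_right, Nat.cast_one, one_mul, Nat.cast_zero] at this
    linarith [this]
  have hcomp : fdS n (p.comp (X + Polynomial.C 1))
      = ∑ i ∈ Finset.range (n + 1), (-1 : ℝ) ^ i * (n.choose i : ℝ) * p.eval ((i:ℝ) + 1) := by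
    simp [fdS, eval_comp]
  calc fdS (n + 1) p
      = ∑ i ∈ Finset.range (n + 1),
          (-1 : ℝ) ^ (i+1) * ((n+1).choose (i+1) : ℝ) * p.eval ((i:ℝ) + 1) + p.eval 0 := by
        rw [fdS, Finset.sum_range_succ' (fun j => (-1 : ℝ) ^ j * ((n+1).choose j : ℝ) * p.eval (j : ℝ)) (n+1)]
        push_cast
        simp
    _ = ∑ i ∈ Finset.range (n + 1),
          ((-1 : ℝ) ^ (i+1) * (n.choose i : ℝ) * p.eval ((i:ℝ) + 1)
            + (-1 : ℝ) ^ (i+1) * (n.choose (i+1) : ℝ) * p.eval ((i:ℝ) + 1)) + p.eval 0 := by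
        congr 1
        refine Finset.sum_congr rfl fun i _ => ?_
        rw [Nat.choose_succ_succ]
        push_cast
        ring
    _ = - fdS n (p.comp (X + Polynomial.C 1)) + (fdS n p - p.eval 0) + p.eval 0 := by
        have h1 : ∑ i ∈ Finset.range (n + 1),
            (-1 : ℝ) ^ (i+1) * (n.choose i : ℝ) * p.eval ((i:ℝ) + 1)
            = - fdS n (p.comp (X + Polynomial.C 1)) := by
          rw [hcomp, ← Finset.sum_neg_distrib]
          refine Finset.sum_congr rfl fun i _ => ?_
          ring
        rw [Finset.sum_add_distrib, hg', h1]
    _ = -(fdS n (p.comp (X + Polynomial.C 1)) - fdS n p) := by ring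

lemma deg_delta (p : Polynomial ℝ) (hp : p ≠ 0) :
    (p.comp (X + Polynomial.C 1) - p).degree < p.degree := by
  by_cases h0 : p.natDegree = 0
  · obtain ⟨x, rfl⟩ := Polynomial.natDegree_eq_zero.mp h0
    simp only [Polynomial.C_comp, sub_self, Polynomial.degree_zero]
    exact lt_of_lt_of_le (WithBot.bot_lt_iff_ne_bot.mpr (by simp))
      (le_of_eq (Polynomial.degree_C (fun h => hp (by rw [h]; simp))).symm)
  · have hq : (X + Polynomial.C (1:ℝ)).natDegree = 1 := Polynomial.natDegree_X_add_C 1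
    have hlc : (p.comp (X + Polynomial.C 1)).leadingCoeff = p.leadingCoeff := by
      rw [Polynomial.leadingCoeff_comp (by rw [hq]; norm_num),
        (Polynomial.monic_X_add_C (1:ℝ)).leadingCoeff, one_pow, mul_one]
    have hcne : p.comp (X + Polynomial.C 1) ≠ 0 := by
      intro h
      apply hp
      rw [← Polynomial.leadingCoeff_eq_zero, ← hlc, h, Polynomial.leadingCoeff_zero]
    have hdeg : (p.comp (X + Polynomial.C 1)).degree = p.degree := by
      rw [Polynomial.degree_eq_natDegree hcne, Polynomial.degree_eq_natDegree hp,
        Polynomial.natDegree_comp, hq, mul_one]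
    have := Polynomial.degree_sub_lt hdeg hcne hlc
    rwa [hdeg] at this

lemma fdS_zero_of_degree_lt : ∀ (n : ℕ) (p : Polynomial ℝ), p.degree < (n : ℕ) → fdS n p = 0 := by
  intro n
  induction n with
  | zero =>
    intro p hp
    have : p = 0 := by
      rw [← Polynomial.degree_eq_bot]
      exact Nat.WithBot.lt_zero_iff.mp (by simpa using hp)
    simp [this, fdS]
  | succ n ih =>
    intro p hp
    rw [fdS_succ]
    by_cases h0 : p = 0
    · simp [h0, fdS]
    · have h1 : (p.comp (X + Polynomial.C 1) - p).degree < (n : ℕ) := by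
        refine lt_of_lt_of_le (deg_delta p h0) ?_
        rw [Polynomial.degree_eq_natDegree h0] at hp ⊢
        have h2 : p.natDegree < n + 1 := by exact_mod_cast hp
        exact_mod_cast Nat.lt_succ_iff.mp h2
      rw [ih _ h1, neg_zero]

lemma fdS_pow : ∀ n : ℕ, fdS n (X ^ n : Polynomial ℝ) = (-1 : ℝ) ^ n * (n.factorial : ℝ) := by
  intro n
  induction n with
  | zero => simp [fdS]
  | succ n ih =>
    rw [fdS_succ, Polynomial.X_pow_comp]
    set Δ : Polynomial ℝ := (X + Polynomial.C 1) ^ (n+1) - X ^ (n+1) with hΔ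
    set r : Polynomial ℝ := Δ - Polynomial.C ((n:ℝ)+1) * X ^ n with hr
    have hdecomp : Δ = Polynomial.C ((n:ℝ)+1) * X ^ n + r := by rw [hr]; ring
    have hrdeg : r.degree < (n : ℕ) := by
      rw [Polynomial.degree_lt_iff_coeff_zero]
      intro m hm
      rw [hr, hΔ]
      simp only [Polynomial.coeff_sub, Polynomial.coeff_C_mul, Polynomial.coeff_X_pow,
        Polynomial.coeff_X_add_C_pow, one_pow, one_mul]
      rcases eq_or_lt_of_le hm with h | h
      · subst h
        simp [Nat.choose_succ_self_right, Nat.succ_ne_self]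
      · rcases eq_or_lt_of_le (Nat.succ_le_of_lt h) with h2 | h2
        · rw [← h2]
          simp
        · rw [Nat.choose_eq_zero_of_lt h2]
          have : m ≠ n := by omega
          have h3 : ¬ (n + 1 = m) := by omega
          have h4 : ¬ (m = n + 1) := by omega
          simp [this, h3, h4]
    rw [hdecomp, fdS_add, fdS_C_mul, ih, fdS_zero_of_degree_lt n r hrdeg]
    rw [pow_succ, Nat.factorial_succ]
    push_cast
    ring

lemma fdS_of_natDegree_le (n : ℕ) (p : Polynomial ℝ) (hp : p.natDegree ≤ n) :
    fdS n p = p.coeff n * ((-1 : ℝ) ^ n * (n.factorial : ℝ)) := by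
  set r : Polynomial ℝ := p - Polynomial.C (p.coeff n) * X ^ n with hr
  have hdecomp : p = Polynomial.C (p.coeff n) * X ^ n + r := by rw [hr]; ring
  have hrdeg : r.degree < (n : ℕ) := by
    rw [Polynomial.degree_lt_iff_coeff_zero]
    intro m hm
    rw [hr]
    simp only [Polynomial.coeff_sub, Polynomial.coeff_C_mul, Polynomial.coeff_X_pow]
    rcases eq_or_lt_of_le hm with h | h
    · subst h; simp
    · rw [Polynomial.coeff_eq_zero_of_natDegree_lt (lt_of_le_of_lt hp h)]
      have h2 : ¬ (n = m) := by omega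
      have h3 : ¬ (m = n) := by omega
      simp [h2, h3]
  conv_lhs => rw [hdecomp]
  rw [fdS_add, fdS_C_mul, fdS_pow, fdS_zero_of_degree_lt n r hrdeg, add_zero]

lemma Gamma_add_nat (x : ℝ) (hx : 0 < x) : ∀ i : ℕ,
    Real.Gamma (x + i) = (ascPochhammer ℝ i).eval x * Real.Gamma x := by
  intro i
  induction i with
  | zero => simp [ascPochhammer_zero]
  | succ i ih =>
    have hne : x + (i:ℝ) ≠ 0 := by positivity
    rw [show x + ((i:ℕ)+1:ℕ) = (x + i) + 1 by push_cast; ring, Real.Gamma_add_one hne,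
      ascPochhammer_succ_eval, ih]
    ring

/-- `q ν i = (ascPochhammer ℝ i).comp (X + C ν)`. -/
noncomputable def qpoly (ν : ℝ) (i : ℕ) : Polynomial ℝ :=
  (ascPochhammer ℝ i).comp (X + Polynomial.C ν)

lemma qpoly_eval (ν : ℝ) (i j : ℕ) :
    (qpoly ν i).eval (j : ℝ) = (ascPochhammer ℝ i).eval (ν + j) := by
  rw [qpoly, Polynomial.eval_comp]
  simp [add_comm]

lemma ratio_eq (ν : ℝ) (hν : 0 < ν) (i j : ℕ) :
    Real.Gamma (ν + i + j) = (qpoly ν i).eval (j : ℝ) * Real.Gamma (ν + j) := by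
  have h := Gamma_add_nat (ν + j) (by positivity) i
  rw [qpoly_eval, show ν + (i:ℝ) + j = (ν + j) + i by ring, h]

lemma qpoly_natDegree (ν : ℝ) (i : ℕ) : (qpoly ν i).natDegree = i := by
  rw [qpoly, Polynomial.natDegree_comp, ascPochhammer_natDegree, Polynomial.natDegree_X_add_C,
    mul_one]

lemma qpoly_monic (ν : ℝ) (i : ℕ) : (qpoly ν i).Monic := by
  refine (monic_ascPochhammer ℝ i).comp (Polynomial.monic_X_add_C ν) ?_
  rw [Polynomial.natDegree_X_add_C]
  norm_num

lemma Tsum_eq (ν : ℝ) (hν : 0 < ν) (t s : ℕ) (hts : t ≤ s) :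
    ∑ i ∈ Finset.range (t+1), ∑ j ∈ Finset.range (s+1),
      (-1:ℝ)^i * (-1:ℝ)^j * (t.choose i : ℝ) * (s.choose j : ℝ) *
        (Real.Gamma (ν + i + j) / (Real.Gamma (ν + i) * Real.Gamma (ν + j)))
    = if t = s then (t.factorial : ℝ) / Real.Gamma (ν + t) else 0 := by
  have hΓpos : ∀ k : ℕ, 0 < Real.Gamma (ν + k) := fun k =>
    Real.Gamma_pos_of_pos (by positivity)
  have hinner : ∀ i : ℕ,
      ∑ j ∈ Finset.range (s+1),
        (-1:ℝ)^i * (-1:ℝ)^j * (t.choose i : ℝ) * (s.choose j : ℝ) *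
          (Real.Gamma (ν + i + j) / (Real.Gamma (ν + i) * Real.Gamma (ν + j)))
      = ((-1:ℝ)^i * (t.choose i : ℝ) / Real.Gamma (ν + i)) * fdS s (qpoly ν i) := by
    intro i
    rw [fdS, Finset.mul_sum]
    refine Finset.sum_congr rfl fun j _ => ?_
    rw [ratio_eq ν hν i j]
    have h1 := (hΓpos i).ne'
    have h2 := (hΓpos j).ne'
    field_simp
  have hfd_lt : ∀ i : ℕ, i < s → fdS s (qpoly ν i) = 0 := by
    intro i hi
    refine fdS_zero_of_degree_lt s _ (lt_of_le_of_lt Polynomial.degree_le_natDegree ?_)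
    rw [qpoly_natDegree]
    exact_mod_cast hi
  rcases eq_or_lt_of_le hts with h | h
  · subst h
    simp only [if_pos rfl]
    rw [Finset.sum_congr rfl fun i _ => hinner i, Finset.sum_range_succ]
    have hzero : ∀ i ∈ Finset.range t,
        ((-1:ℝ)^i * (t.choose i : ℝ) / Real.Gamma (ν + i)) * fdS t (qpoly ν i) = 0 := by
      intro i hi
      rw [hfd_lt i (Finset.mem_range.mp hi), mul_zero]
    rw [Finset.sum_congr rfl hzero, Finset.sum_const, smul_zero, zero_add]
    have hcoeff : (qpoly ν t).coeff t = 1 := by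
      have := (qpoly_monic ν t).coeff_natDegree
      rwa [qpoly_natDegree] at this
    rw [fdS_of_natDegree_le t _ (le_of_eq (qpoly_natDegree ν t)), hcoeff, Nat.choose_self]
    have := (hΓpos t).ne'
    field_simp
    ring_nf
    rw [mul_comm t 2, pow_mul]
    norm_num
    rw [mul_left_comm, mul_inv_cancel₀ this, mul_one]
  · rw [if_neg (by omega)]
    rw [Finset.sum_congr rfl fun i _ => hinner i]
    refine Finset.sum_eq_zero fun i hi => ?_
    rw [hfd_lt i (by have := Finset.mem_range.mp hi; omega), mul_zero]

lemma hbase_int {a : ℝ} (ha : 0 < a) {w : ℝ} (hw : 0 < w) :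
    IntegrableOn (fun u : ℝ => u ^ (w - 1) * Real.exp (-(2/a) * u)) (Set.Ioi 0) := by
  have h := integrableOn_rpow_mul_exp_neg_mul_rpow (p := 1) (s := w - 1) (b := 2/a)
    (by linarith) zero_lt_one (by positivity)
  refine h.congr_fun (fun x _ => ?_) measurableSet_Ioi
  simp only [Real.rpow_one]

lemma hbase_val {a : ℝ} (ha : 0 < a) {w : ℝ} (hw : 0 < w) :
    ∫ u in Set.Ioi (0:ℝ), u ^ (w - 1) * Real.exp (-(2/a) * u)
      = (a/2) ^ w * Real.Gamma w := by
  have hcongr : ∫ u in Set.Ioi (0:ℝ), u ^ (w - 1) * Real.exp (-(2/a) * u)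
      = ∫ u in Set.Ioi (0:ℝ), u ^ (w - 1) * Real.exp (-(2/a) * u ^ (1:ℝ)) := by
    refine setIntegral_congr_fun measurableSet_Ioi fun u _ => ?_
    rw [Real.rpow_one]
  rw [hcongr, integral_rpow_mul_exp_neg_mul_rpow zero_lt_one (by linarith) (by positivity)]
  have h1 : (w - 1 + 1) / 1 = w := by ring
  have h2 : ((2:ℝ)/a) ^ (-w) = (a/2) ^ w := by
    rw [show (a/2 : ℝ) = (2/a)⁻¹ by rw [inv_div], Real.inv_rpow (by positivity),
      ← Real.rpow_neg (by positivity)]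
  rw [h1, show -(w - 1 + 1) / 1 = -w by ring, h2]
  ring

lemma oneD (a c γ : ℝ) (ha : 0 < a) (hγ : 0 < γ) (t s : ℕ) :
    ∫ y in Set.Ioi (0:ℝ),
        lagP a c γ t y * lagP a c γ s y * (y ^ (γ - 1) * Real.exp (-(2/a) * y ^ a))
    = (1/a) * 2 ^ (2*t) * 2 ^ (2*s) * (1+c) ^ (2*t) * (1+c) ^ (2*s)
        * Real.Gamma (γ/a + t) * Real.Gamma (γ/a + s) * (a/2) ^ (γ/a + t + s)
        * ∑ i ∈ Finset.range (t+1), ∑ j ∈ Finset.range (s+1),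
            (-1:ℝ)^i * (-1:ℝ)^j * (t.choose i : ℝ) * (s.choose j : ℝ) *
              (Real.Gamma (γ/a + i + j) / (Real.Gamma (γ/a + i) * Real.Gamma (γ/a + j))) := by
  have hν : 0 < γ / a := div_pos hγ ha
  have hpos : ∀ k : ℕ, (0:ℝ) < γ/a + k :=
    fun k => add_pos_of_pos_of_nonneg hν (Nat.cast_nonneg _)
  have hpos2 : ∀ i j : ℕ, (0:ℝ) < γ/a + i + j :=
    fun i j => add_pos_of_pos_of_nonneg (hpos i) (Nat.cast_nonneg _)
  set A : ℕ → ℝ := fun i =>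
    2 ^ (2 * t) * (1 + c) ^ (2 * t) * (t.choose i : ℝ)
      * (Real.Gamma (γ/a + t) / Real.Gamma (γ/a + i)) * (a / 2) ^ (t - i) * (-1 : ℝ) ^ i with hA
  set B : ℕ → ℝ := fun j =>
    2 ^ (2 * s) * (1 + c) ^ (2 * s) * (s.choose j : ℝ)
      * (Real.Gamma (γ/a + s) / Real.Gamma (γ/a + j)) * (a / 2) ^ (s - j) * (-1 : ℝ) ^ j with hB
  set g : ℝ → ℝ := fun u => (1/a) * ∑ i ∈ Finset.range (t+1), ∑ j ∈ Finset.range (s+1),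
    (A i * B j) * (u ^ (γ/a + i + j - 1) * Real.exp (-(2/a) * u)) with hg
  have key : ∀ y ∈ Set.Ioi (0:ℝ),
      lagP a c γ t y * lagP a c γ s y * (y ^ (γ - 1) * Real.exp (-(2/a) * y ^ a))
      = (|a| * y ^ (a - 1)) • g (y ^ a) := by
    intro y hy
    have hy' : (0:ℝ) < y := hy
    rw [smul_eq_mul, hg, lagP, lagP]
    simp only []
    rw [Finset.sum_mul_sum]
    rw [Finset.sum_mul, Finset.mul_sum, Finset.mul_sum]
    refine Finset.sum_congr rfl fun i hi => ?_
    rw [Finset.sum_mul, Finset.mul_sum, Finset.mul_sum]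
    refine Finset.sum_congr rfl fun j hj => ?_
    rw [abs_of_pos ha, ← Real.rpow_mul hy'.le]
    have hexp : a * (γ/a + i + j - 1) = (γ - 1) + (a * i + a * j) - (a - 1) := by
      field_simp; ring
    rw [hexp]
    have hsplit : y ^ ((γ - 1) + (a * i + a * j) - (a - 1))
        = y ^ (γ - 1) * y ^ (a * (i:ℝ)) * y ^ (a * (j:ℝ)) * (y ^ (a-1))⁻¹ := by
      rw [← Real.rpow_neg hy'.le, ← Real.rpow_add hy', ← Real.rpow_add hy', ← Real.rpow_add hy']
      congr 1
      ring
    rw [hsplit, hA, hB]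
    have hyne : y ^ (a - 1) ≠ 0 := (Real.rpow_pos_of_pos hy' _).ne'
    field_simp
  rw [setIntegral_congr_fun measurableSet_Ioi key, integral_comp_rpow_Ioi g ha.ne', hg]
  simp only []
  rw [MeasureTheory.integral_const_mul]
  rw [MeasureTheory.integral_finset_sum (μ := volume.restrict (Set.Ioi (0:ℝ)))
    (Finset.range (t+1))
    (f := fun i u => ∑ j ∈ Finset.range (s+1),
      (A i * B j) * (u ^ (γ/a + i + j - 1) * Real.exp (-(2/a) * u)))
    (fun i _ => integrable_finset_sum _ (fun j _ =>
      ((hbase_int ha (hpos2 i j)).const_mul _)))]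
  have hswap : ∀ i ∈ Finset.range (t+1),
      ∫ u in Set.Ioi (0:ℝ), ∑ j ∈ Finset.range (s+1),
        (A i * B j) * (u ^ (γ/a + i + j - 1) * Real.exp (-(2/a) * u))
      = ∑ j ∈ Finset.range (s+1), (A i * B j) * ((a/2) ^ (γ/a + i + j) * Real.Gamma (γ/a + i + j)) := by
    intro i _
    rw [MeasureTheory.integral_finset_sum _ (fun j _ =>
      ((hbase_int ha (hpos2 i j)).const_mul _))]
    refine Finset.sum_congr rfl fun j _ => ?_
    rw [MeasureTheory.integral_const_mul, hbase_val ha (hpos2 i j)]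
  rw [Finset.sum_congr rfl hswap]
  rw [Finset.mul_sum]
  conv_rhs => rw [Finset.mul_sum]
  refine Finset.sum_congr rfl fun i hi => ?_
  rw [Finset.mul_sum]
  conv_rhs => rw [Finset.mul_sum]
  refine Finset.sum_congr rfl fun j hj => ?_
  have hit : i ≤ t := by have := Finset.mem_range.mp hi; omega
  have hjs : j ≤ s := by have := Finset.mem_range.mp hj; omega
  have hΓi : Real.Gamma (γ/a + i) ≠ 0 := (Real.Gamma_pos_of_pos (hpos i)).ne'
  have hΓj : Real.Gamma (γ/a + j) ≠ 0 := (Real.Gamma_pos_of_pos (hpos j)).ne'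
  have hpow1 : ((a:ℝ)/2) ^ (t - i) = (a/2) ^ (((t:ℝ)) - i) := by
    rw [← Real.rpow_natCast (a/2) (t - i), Nat.cast_sub hit]
  have hpow2 : ((a:ℝ)/2) ^ (s - j) = (a/2) ^ (((s:ℝ)) - j) := by
    rw [← Real.rpow_natCast (a/2) (s - j), Nat.cast_sub hjs]
  have hmerge : (a/2 : ℝ) ^ (((t:ℝ)) - i) * ((a/2) ^ (((s:ℝ)) - j) * (a/2) ^ (γ/a + i + j))
      = (a/2) ^ (γ/a + t + s) := by
    rw [← Real.rpow_add (by positivity), ← Real.rpow_add (by positivity)]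
    congr 1
    ring
  rw [hA, hB]
  simp only []
  rw [hpow1, hpow2]
  rw [show (2:ℝ) ^ (2*t) * (1+c) ^ (2*t) * (t.choose i : ℝ)
      * (Real.Gamma (γ/a + t) / Real.Gamma (γ/a + i)) * (a/2) ^ (((t:ℝ)) - i) * (-1:ℝ)^i
      * ((2:ℝ) ^ (2*s) * (1+c) ^ (2*s) * (s.choose j : ℝ)
      * (Real.Gamma (γ/a + s) / Real.Gamma (γ/a + j)) * (a/2) ^ (((s:ℝ)) - j) * (-1:ℝ)^j)
      * ((a/2) ^ (γ/a + i + j) * Real.Gamma (γ/a + i + j))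
      = (1:ℝ) * 2 ^ (2*t) * 2 ^ (2*s) * (1+c) ^ (2*t) * (1+c) ^ (2*s)
        * Real.Gamma (γ/a + t) * Real.Gamma (γ/a + s)
        * ((a/2) ^ (((t:ℝ)) - i) * ((a/2) ^ (((s:ℝ)) - j) * (a/2) ^ (γ/a + i + j)))
        * ((-1:ℝ)^i * (-1:ℝ)^j * (t.choose i : ℝ) * (s.choose j : ℝ)
            * (Real.Gamma (γ/a + i + j) / (Real.Gamma (γ/a + i) * Real.Gamma (γ/a + j)))) by
        field_simp]
  rw [hmerge]
  ring

theorem stmt_13 (m : ℕ) (hm : 1 ≤ m) (a b c : ℝ) (ha : 0 < a) (hc : 0 < 1 + c) :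
    (∀ s t : ℕ, s ≠ t →
      ∫ x : EuclideanSpace ℝ (Fin m),
          lagPhi m a b c t x * lagPhi m a b c s x
            * ‖x‖ ^ (a / 2 + (2 * b - 1 - c * m) / (1 + c)) = 0) ∧
    ∀ t : ℕ,
      ∫ x : EuclideanSpace ℝ (Fin m),
          lagPhi m a b c t x ^ 2 * ‖x‖ ^ (a / 2 + (2 * b - 1 - c * m) / (1 + c))
        = (2 * Real.pi ^ ((m : ℝ) / 2) / Real.Gamma ((m : ℝ) / 2))
            * ((1 / a) * (2 * a) ^ (2 * t) * (1 + c) ^ (4 * t) * (t.factorial : ℝ)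
                * Real.Gamma (gamma0 m a c / a + t) * (a / 2) ^ (gamma0 m a c / a)) := by
  have hm1 : (1:ℝ) ≤ (m:ℝ) := by exact_mod_cast hm
  have hγ : 0 < gamma0 m a c := by
    rw [gamma0]
    have h1 : (0:ℝ) ≤ ((m:ℝ) - 1) / (1 + c) := div_nonneg (by linarith) hc.le
    have h2 : (0:ℝ) < a / 2 := by positivity
    linarith
  have hν : 0 < gamma0 m a c / a := div_pos hγ ha
  haveI : Nonempty (Fin m) := ⟨⟨0, hm⟩⟩
  haveI : Nontrivial (EuclideanSpace ℝ (Fin m)) := by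
    refine Module.nontrivial_of_finrank_pos (R := ℝ) ?_
    rw [finrank_euclideanSpace_fin]
    omega
  have hΓm : (0:ℝ) < Real.Gamma ((m:ℝ)/2) := Real.Gamma_pos_of_pos (by positivity)
  have hball : (volume (Metric.ball (0 : EuclideanSpace ℝ (Fin m)) 1)).toReal
      = Real.pi ^ ((m:ℝ)/2) / Real.Gamma ((m:ℝ)/2 + 1) := by
    rw [EuclideanSpace.volume_ball]
    rw [Fintype.card_fin]
    have hΓpos : 0 < Real.Gamma ((m:ℝ)/2 + 1) := Real.Gamma_pos_of_pos (by positivity)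
    rw [ENNReal.ofReal_one, one_pow, one_mul, ENNReal.toReal_ofReal (by positivity)]
    congr 1
    rw [Real.sqrt_eq_rpow, ← Real.rpow_natCast (Real.pi ^ ((1:ℝ)/2)) m,
      ← Real.rpow_mul Real.pi_pos.le]
    congr 1
    ring
  have hconst : (m:ℝ) * (Real.pi ^ ((m:ℝ)/2) / Real.Gamma ((m:ℝ)/2 + 1))
      = 2 * Real.pi ^ ((m:ℝ)/2) / Real.Gamma ((m:ℝ)/2) := by
    rw [Real.Gamma_add_one (by positivity : ((m:ℝ)/2) ≠ 0)]
    field_simp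
  have main : ∀ t s : ℕ,
      ∫ x : EuclideanSpace ℝ (Fin m),
          lagPhi m a b c t x * lagPhi m a b c s x
            * ‖x‖ ^ (a / 2 + (2 * b - 1 - c * m) / (1 + c))
      = (2 * Real.pi ^ ((m:ℝ)/2) / Real.Gamma ((m:ℝ)/2)) *
          ((1/a) * 2 ^ (2*t) * 2 ^ (2*s) * (1+c) ^ (2*t) * (1+c) ^ (2*s)
            * Real.Gamma (gamma0 m a c/a + t) * Real.Gamma (gamma0 m a c/a + s)
            * (a/2) ^ (gamma0 m a c/a + t + s)
            * ∑ i ∈ Finset.range (t+1), ∑ j ∈ Finset.range (s+1),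
                (-1:ℝ)^i * (-1:ℝ)^j * (t.choose i : ℝ) * (s.choose j : ℝ) *
                  (Real.Gamma (gamma0 m a c/a + i + j) /
                    (Real.Gamma (gamma0 m a c/a + i) * Real.Gamma (gamma0 m a c/a + j)))) := by
    intro t s
    set γ := gamma0 m a c with hγdef
    set F : ℝ → ℝ := fun r =>
      lagP a c γ t r * r ^ beta0 b c * Real.exp (-r ^ a / a)
        * (lagP a c γ s r * r ^ beta0 b c * Real.exp (-r ^ a / a))
        * r ^ (a / 2 + (2 * b - 1 - c * m) / (1 + c)) with hF
    have hint : (∫ x : EuclideanSpace ℝ (Fin m),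
        lagPhi m a b c t x * lagPhi m a b c s x
          * ‖x‖ ^ (a / 2 + (2 * b - 1 - c * m) / (1 + c)))
        = ∫ x : EuclideanSpace ℝ (Fin m), F ‖x‖ := by
      simp only [lagPhi, hF]
      rfl
    rw [hint, MeasureTheory.integral_fun_norm_addHaar volume F, finrank_euclideanSpace_fin]
    have hrad : (∫ y in Set.Ioi (0:ℝ), y ^ (m - 1 : ℕ) • F y)
        = ∫ y in Set.Ioi (0:ℝ),
            lagP a c γ t y * lagP a c γ s y * (y ^ (γ - 1) * Real.exp (-(2/a) * y ^ a)) := by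
      refine setIntegral_congr_fun measurableSet_Ioi fun y hy => ?_
      have hy' : (0:ℝ) < y := hy
      have h1 : Real.exp (-(2/a) * y ^ a) = Real.exp (-y ^ a / a) * Real.exp (-y ^ a / a) := by
        rw [← Real.exp_add]
        congr 1
        field_simp
        ring
      have h2 : y ^ (γ - 1) = y ^ beta0 b c * y ^ beta0 b c
          * y ^ (a / 2 + (2 * b - 1 - c * m) / (1 + c)) * y ^ ((m:ℝ) - 1) := by
        rw [← Real.rpow_add hy', ← Real.rpow_add hy', ← Real.rpow_add hy']
        congr 1
        rw [hγdef, gamma0, beta0]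
        field_simp
        ring
      have h3 : (y:ℝ) ^ (m - 1 : ℕ) = y ^ ((m:ℝ) - 1) := by
        rw [← Real.rpow_natCast y (m-1)]
        congr 1
        push_cast [Nat.cast_sub hm]
        ring
      rw [smul_eq_mul, hF]
      simp only []
      rw [h1, h2, h3]
      ring
    rw [hrad, oneD a c γ ha hγ t s, measureReal_def, hball]
    rw [nsmul_eq_mul, smul_eq_mul, ← mul_assoc, hconst]
  constructor
  · intro s t hst
    rw [main t s]
    have hT : (∑ i ∈ Finset.range (t+1), ∑ j ∈ Finset.range (s+1),
        (-1:ℝ)^i * (-1:ℝ)^j * (t.choose i : ℝ) * (s.choose j : ℝ) *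
          (Real.Gamma (gamma0 m a c/a + i + j) /
            (Real.Gamma (gamma0 m a c/a + i) * Real.Gamma (gamma0 m a c/a + j)))) = 0 := by
      rcases lt_or_gt_of_ne (Ne.symm hst) with h | h
      · have := Tsum_eq (gamma0 m a c/a) hν t s h.le
        rwa [if_neg (by omega)] at this
      · rw [Finset.sum_comm]
        have := Tsum_eq (gamma0 m a c/a) hν s t h.le
        rw [if_neg (by omega)] at this
        rw [← this]
        refine Finset.sum_congr rfl fun j _ => Finset.sum_congr rfl fun i _ => ?_
        rw [show gamma0 m a c/a + (i:ℝ) + j = gamma0 m a c/a + j + i by ring]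
        ring
    rw [hT, mul_zero, mul_zero]
  · intro t
    have hsq : (∫ x : EuclideanSpace ℝ (Fin m),
        lagPhi m a b c t x ^ 2 * ‖x‖ ^ (a / 2 + (2 * b - 1 - c * m) / (1 + c)))
        = ∫ x : EuclideanSpace ℝ (Fin m),
            lagPhi m a b c t x * lagPhi m a b c t x
              * ‖x‖ ^ (a / 2 + (2 * b - 1 - c * m) / (1 + c)) := by
      congr 1
      funext x
      ring
    rw [hsq, main t t, Tsum_eq (gamma0 m a c/a) hν t t le_rfl, if_pos rfl]
    have hΓt : Real.Gamma (gamma0 m a c/a + t) ≠ 0 :=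
      (Real.Gamma_pos_of_pos (by positivity)).ne'
    have e1 : (a/2:ℝ) ^ (gamma0 m a c/a + t + t)
        = (a/2) ^ (gamma0 m a c/a) * ((a/2:ℝ) ^ (2*t : ℕ)) := by
      rw [← Real.rpow_natCast (a/2) (2*t), ← Real.rpow_add (by positivity)]
      congr 1
      push_cast
      ring
    rw [e1]
    congr 1
    field_simp
    ring_nf
    rw [show (2:ℝ) ^ (t * 4) = 2 ^ (t * 2) * 2 ^ (t * 2) by rw [← pow_add]; ring_nf, div_pow, one_pow]
    field_simp
end

section
/- Assume a > 0 and c = 2/a − 1, and define the operators P and Q on functions on ℝᵐ \ {0} by (P f)(x) = ‖x‖^{b} f( (a/2)^{1/a} ‖x‖^{2/a − 1} x ) and (Q f)(x) = ‖x‖^{−ab/2} f( (2/a)^{1/2} ‖x‖^{a/2 − 1} x ). Then for every smooth f : ℝᵐ \ {0} → ℝ, every i ∈ {1,…,m} and every x ≠ 0: ‖x‖^{1−a/2} ∂_i f(x) + b ‖x‖^{−a/2−1} x_i f(x) + (2/a − 1) ‖x‖^{−a/2−1} x_i E f(x) = (a/2)^{(b−1)/2} · Q( ∂_i (P f) )(x).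 (The intertwining relation D_i = (a/2)^{(b−1)/2} Q ∘ ∂_i ∘ P for the components of the deformed Dirac operator, in the case of trivial multiplicity function k = 0.) -/
open Real

section AuxLemmas

lemma hasFDerivAt_norm_rpow_ne {E : Type*} [NormedAddCommGroup E] [InnerProductSpace ℝ E]
    (x : E) (hx : x ≠ 0) (p : ℝ) :
    HasFDerivAt (fun y : E ↦ ‖y‖ ^ p) ((p * ‖x‖ ^ (p - 2)) • innerSL ℝ x) x := by
  apply HasStrictFDerivAt.hasFDerivAt
  convert (hasStrictFDerivAt_norm_sq x).rpow_const (p := p / 2) (by simp [hx]) using 0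
  simp_rw [← Real.rpow_natCast_mul (norm_nonneg _), ← Nat.cast_smul_eq_nsmul ℝ, smul_smul]
  ring_nf

lemma clm_sum {m : ℕ} (L : EuclideanSpace ℝ (Fin m) →L[ℝ] ℝ) (x : EuclideanSpace ℝ (Fin m)) :
    L x = ∑ j, x j * L (EuclideanSpace.single j 1) := by
  have hx : x = ∑ j, x j • EuclideanSpace.single j 1 := by
    ext j
    rw [WithLp.ofLp_sum, Finset.sum_apply]
    simp [EuclideanSpace.single_apply, PiLp.smul_apply]
  conv_lhs => rw [hx]
  simp [smul_eq_mul]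

lemma coeff1 (a b s : ℝ) (ha : 0 < a) (hs : 0 < s) :
    (a/2) ^ ((b-1)/2) * (s ^ (-(a*b)/2) * (((2/a) ^ ((1:ℝ)/2) * s ^ (a/2-1) * s) ^ b *
      ((a/2) ^ (1/a) * ((2/a) ^ ((1:ℝ)/2) * s ^ (a/2-1) * s) ^ (2/a-1)))) = s ^ (1-a/2) := by
  have hA : (0:ℝ) < a/2 := by positivity
  have h2a : (0:ℝ) < 2/a := by positivity
  have hc : (0:ℝ) < (2/a) ^ ((1:ℝ)/2) := by positivity
  have hd : (0:ℝ) < s ^ (a/2-1) := by positivity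
  have hr : (0:ℝ) < (2/a) ^ ((1:ℝ)/2) * s ^ (a/2-1) * s := by positivity
  simp only [Real.rpow_def_of_pos hr]
  simp only [Real.log_mul (mul_pos hc hd).ne' hs.ne', Real.log_mul hc.ne' hd.ne',
    Real.log_rpow h2a, Real.log_rpow hs]
  simp only [Real.rpow_def_of_pos hA, Real.rpow_def_of_pos hs]
  rw [Real.log_div (by norm_num : (2:ℝ) ≠ 0) ha.ne', Real.log_div ha.ne' (by norm_num : (2:ℝ) ≠ 0)]
  simp only [← Real.exp_add]
  rw [Real.exp_eq_exp]
  field_simp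
  ring

lemma coeff2 (a b s : ℝ) (ha : 0 < a) (hs : 0 < s) :
    (a/2) ^ ((b-1)/2) * (s ^ (-(a*b)/2) * (((2/a) ^ ((1:ℝ)/2) * s ^ (a/2-1) * s) ^ (b-2) *
      ((2/a) ^ ((1:ℝ)/2) * s ^ (a/2-1)))) = s ^ (-(a/2)-1) := by
  have hA : (0:ℝ) < a/2 := by positivity
  have h2a : (0:ℝ) < 2/a := by positivity
  have hc : (0:ℝ) < (2/a) ^ ((1:ℝ)/2) := by positivity
  have hd : (0:ℝ) < s ^ (a/2-1) := by positivity
  have hr : (0:ℝ) < (2/a) ^ ((1:ℝ)/2) * s ^ (a/2-1) * s := by positivity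
  simp only [Real.rpow_def_of_pos hr]
  simp only [Real.log_mul (mul_pos hc hd).ne' hs.ne', Real.log_mul hc.ne' hd.ne',
    Real.log_rpow h2a, Real.log_rpow hs]
  simp only [Real.rpow_def_of_pos hA, Real.rpow_def_of_pos hs, Real.rpow_def_of_pos h2a]
  rw [Real.log_div (by norm_num : (2:ℝ) ≠ 0) ha.ne', Real.log_div ha.ne' (by norm_num : (2:ℝ) ≠ 0)]
  simp only [← Real.exp_add]
  rw [Real.exp_eq_exp]
  field_simp
  ring

lemma coeff3 (a b s : ℝ) (ha : 0 < a) (hs : 0 < s) :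
    (a/2) ^ ((b-1)/2) * (s ^ (-(a*b)/2) * (((2/a) ^ ((1:ℝ)/2) * s ^ (a/2-1) * s) ^ b *
      ((a/2) ^ (1/a) * ((2/a) ^ ((1:ℝ)/2) * s ^ (a/2-1) * s) ^ (2/a-1-2) *
        ((2/a) ^ ((1:ℝ)/2) * s ^ (a/2-1)) * ((2/a) ^ ((1:ℝ)/2) * s ^ (a/2-1))))) = s ^ (-(a/2)-1) := by
  have hA : (0:ℝ) < a/2 := by positivity
  have h2a : (0:ℝ) < 2/a := by positivity
  have hc : (0:ℝ) < (2/a) ^ ((1:ℝ)/2) := by positivity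
  have hd : (0:ℝ) < s ^ (a/2-1) := by positivity
  have hr : (0:ℝ) < (2/a) ^ ((1:ℝ)/2) * s ^ (a/2-1) * s := by positivity
  simp only [Real.rpow_def_of_pos hr]
  simp only [Real.log_mul (mul_pos hc hd).ne' hs.ne', Real.log_mul hc.ne' hd.ne',
    Real.log_rpow h2a, Real.log_rpow hs]
  simp only [Real.rpow_def_of_pos hA, Real.rpow_def_of_pos hs, Real.rpow_def_of_pos h2a]
  rw [Real.log_div (by norm_num : (2:ℝ) ≠ 0) ha.ne', Real.log_div ha.ne' (by norm_num : (2:ℝ) ≠ 0)]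
  simp only [← Real.exp_add]
  rw [Real.exp_eq_exp]
  field_simp
  ring

lemma scalar_one (a s : ℝ) (ha : 0 < a) (hs : 0 < s) :
    (a/2) ^ (1/a) * ((2/a) ^ ((1:ℝ)/2) * s ^ (a/2-1) * s) ^ (2/a-1) *
      ((2/a) ^ ((1:ℝ)/2) * s ^ (a/2-1)) = 1 := by
  have hA : (0:ℝ) < a/2 := by positivity
  have h2a : (0:ℝ) < 2/a := by positivity
  have hc : (0:ℝ) < (2/a) ^ ((1:ℝ)/2) := by positivity
  have hd : (0:ℝ) < s ^ (a/2-1) := by positivity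
  have hr : (0:ℝ) < (2/a) ^ ((1:ℝ)/2) * s ^ (a/2-1) * s := by positivity
  simp only [Real.rpow_def_of_pos hr]
  simp only [Real.log_mul (mul_pos hc hd).ne' hs.ne', Real.log_mul hc.ne' hd.ne',
    Real.log_rpow h2a, Real.log_rpow hs]
  simp only [Real.rpow_def_of_pos hA, Real.rpow_def_of_pos hs, Real.rpow_def_of_pos h2a]
  rw [Real.log_div (by norm_num : (2:ℝ) ≠ 0) ha.ne', Real.log_div ha.ne' (by norm_num : (2:ℝ) ≠ 0)]
  simp only [← Real.exp_add]
  rw [Real.exp_eq_one_iff]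
  field_simp
  ring

end AuxLemmas

/-- The generalized Kelvin-type transformation
`(P f)(x) = ‖x‖^b f((a/2)^{1/a} ‖x‖^{2/a-1} x)`. -/
noncomputable def Pop {m : ℕ} (a b : ℝ) (f : EuclideanSpace ℝ (Fin m) → ℝ)
    (x : EuclideanSpace ℝ (Fin m)) : ℝ :=
  ‖x‖ ^ b * f (((a / 2) ^ (1 / a) * ‖x‖ ^ (2 / a - 1)) • x)

/-- The generalized Kelvin-type transformation
`(Q f)(x) = ‖x‖^{-ab/2} f((2/a)^{1/2} ‖x‖^{a/2-1} x)`. -/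
noncomputable def Qop {m : ℕ} (a b : ℝ) (f : EuclideanSpace ℝ (Fin m) → ℝ)
    (x : EuclideanSpace ℝ (Fin m)) : ℝ :=
  ‖x‖ ^ (-(a * b) / 2) * f (((2 / a) ^ ((1 : ℝ) / 2) * ‖x‖ ^ (a / 2 - 1)) • x)

lemma pd_Pop {m : ℕ} (a b : ℝ) (ha : 0 < a)
    (f : EuclideanSpace ℝ (Fin m) → ℝ)
    (hf : ContDiffOn ℝ (⊤ : ℕ∞) f {(0 : EuclideanSpace ℝ (Fin m))}ᶜ)
    (i : Fin m) (y : EuclideanSpace ℝ (Fin m)) (hy : y ≠ 0) :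
    pd i (Pop a b f) y =
      b * ‖y‖ ^ (b - 2) * y i * f (((a/2) ^ (1/a) * ‖y‖ ^ (2/a - 1)) • y)
      + ‖y‖ ^ b * ((a/2) ^ (1/a) * ‖y‖ ^ (2/a - 1) * pd i f (((a/2) ^ (1/a) * ‖y‖ ^ (2/a - 1)) • y)
        + (a/2) ^ (1/a) * (2/a - 1) * ‖y‖ ^ (2/a - 1 - 2) * y i *
          (fderiv ℝ f (((a/2) ^ (1/a) * ‖y‖ ^ (2/a - 1)) • y)) y) := by
  have hA : (0:ℝ) < (a/2) ^ (1/a) := by positivity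
  have hny : (0:ℝ) < ‖y‖ := norm_pos_iff.mpr hy
  have hz : (((a/2) ^ (1/a) * ‖y‖ ^ (2/a - 1)) • y) ≠ 0 :=
    smul_ne_zero (by positivity) hy
  have hc : HasFDerivAt (fun w : EuclideanSpace ℝ (Fin m) => (a/2) ^ (1/a) * ‖w‖ ^ (2/a - 1))
      (((a/2) ^ (1/a) * ((2/a - 1) * ‖y‖ ^ (2/a - 1 - 2))) • innerSL ℝ y) y := by
    have := (hasFDerivAt_norm_rpow_ne y hy (2/a - 1)).const_mul ((a/2) ^ (1/a))
    rwa [smul_smul] at this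
  have hφ : HasFDerivAt (fun w : EuclideanSpace ℝ (Fin m) => ((a/2) ^ (1/a) * ‖w‖ ^ (2/a - 1)) • w)
      (((a/2) ^ (1/a) * ‖y‖ ^ (2/a - 1)) • ContinuousLinearMap.id ℝ (EuclideanSpace ℝ (Fin m))
        + ((((a/2) ^ (1/a) * ((2/a - 1) * ‖y‖ ^ (2/a - 1 - 2))) • innerSL ℝ y)).smulRight y) y :=
    hc.smul (hasFDerivAt_id y)
  have hdf : DifferentiableAt ℝ f (((a/2) ^ (1/a) * ‖y‖ ^ (2/a - 1)) • y) :=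
    (hf.contDiffAt ((isOpen_compl_singleton).mem_nhds hz)).differentiableAt (by simp)
  have hnb : HasFDerivAt (fun w : EuclideanSpace ℝ (Fin m) => ‖w‖ ^ b)
      ((b * ‖y‖ ^ (b - 2)) • innerSL ℝ y) y := hasFDerivAt_norm_rpow_ne y hy b
  have hcomp : HasFDerivAt
      (fun w : EuclideanSpace ℝ (Fin m) => f (((a/2) ^ (1/a) * ‖w‖ ^ (2/a - 1)) • w))
      ((fderiv ℝ f (((a/2) ^ (1/a) * ‖y‖ ^ (2/a - 1)) • y)).comp
        (((a/2) ^ (1/a) * ‖y‖ ^ (2/a - 1)) • ContinuousLinearMap.id ℝ (EuclideanSpace ℝ (Fin m))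
          + ((((a/2) ^ (1/a) * ((2/a - 1) * ‖y‖ ^ (2/a - 1 - 2))) • innerSL ℝ y)).smulRight y)) y :=
    HasFDerivAt.comp (f := fun w : EuclideanSpace ℝ (Fin m) =>
      ((a/2) ^ (1/a) * ‖w‖ ^ (2/a - 1)) • w) y (hdf.hasFDerivAt) hφ
  have hP := hnb.mul hcomp
  have hval : pd i (Pop a b f) y
      = (‖y‖ ^ b • ((fderiv ℝ f (((a/2) ^ (1/a) * ‖y‖ ^ (2/a - 1)) • y)).comp
          (((a/2) ^ (1/a) * ‖y‖ ^ (2/a - 1)) • ContinuousLinearMap.id ℝ (EuclideanSpace ℝ (Fin m))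
            + ((((a/2) ^ (1/a) * ((2/a - 1) * ‖y‖ ^ (2/a - 1 - 2))) • innerSL ℝ y)).smulRight y))
        + f (((a/2) ^ (1/a) * ‖y‖ ^ (2/a - 1)) • y) • ((b * ‖y‖ ^ (b - 2)) • innerSL ℝ y))
          (EuclideanSpace.single i 1) := by
    show fderiv ℝ (Pop a b f) y (EuclideanSpace.single i 1) = _
    rw [show Pop a b f = fun w : EuclideanSpace ℝ (Fin m) =>
      ‖w‖ ^ b * f (((a/2) ^ (1/a) * ‖w‖ ^ (2/a - 1)) • w) from rfl, HasFDerivAt.fderiv (f := fun w : EuclideanSpace ℝ (Fin m) =>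
      ‖w‖ ^ b * f (((a/2) ^ (1/a) * ‖w‖ ^ (2/a - 1)) • w)) hP]
  rw [hval]
  simp only [ContinuousLinearMap.add_apply, ContinuousLinearMap.coe_smul', Pi.smul_apply,
    ContinuousLinearMap.comp_apply, ContinuousLinearMap.smulRight_apply,
    ContinuousLinearMap.id_apply, innerSL_apply_apply, map_add, map_smul, smul_eq_mul, pd]
  rw [show (inner ℝ y (EuclideanSpace.single i 1) : ℝ) = y i from by
    rw [EuclideanSpace.inner_single_right]; simp]
  ring

theorem stmt_18 (m : ℕ) (hm : 1 ≤ m) (a b : ℝ) (ha : 0 < a)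
    (f : EuclideanSpace ℝ (Fin m) → ℝ)
    (hf : ContDiffOn ℝ (⊤ : ℕ∞) f {(0 : EuclideanSpace ℝ (Fin m))}ᶜ)
    (i : Fin m) (x : EuclideanSpace ℝ (Fin m)) (hx : x ≠ 0) :
    ‖x‖ ^ (1 - a / 2) * pd i f x + b * ‖x‖ ^ (-(a / 2) - 1) * x i * f x
        + (2 / a - 1) * ‖x‖ ^ (-(a / 2) - 1) * x i * euler f x
      = (a / 2) ^ ((b - 1) / 2) * Qop a b (pd i (Pop a b f)) x := by
  have hs : 0 < ‖x‖ := norm_pos_iff.mpr hx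
  have hμ : (0:ℝ) < (2/a) ^ ((1:ℝ)/2) * ‖x‖ ^ (a/2 - 1) := by positivity
  have hy : ((2/a) ^ ((1:ℝ)/2) * ‖x‖ ^ (a/2 - 1)) • x ≠ 0 := smul_ne_zero hμ.ne' hx
  have hny : ‖((2/a) ^ ((1:ℝ)/2) * ‖x‖ ^ (a/2 - 1)) • x‖
      = (2/a) ^ ((1:ℝ)/2) * ‖x‖ ^ (a/2 - 1) * ‖x‖ := by
    rw [norm_smul, Real.norm_of_nonneg hμ.le]
  have key := pd_Pop a b ha f hf i (((2/a) ^ ((1:ℝ)/2) * ‖x‖ ^ (a/2 - 1)) • x) hy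
  have hφy : ((a/2) ^ (1/a) * ‖((2/a) ^ ((1:ℝ)/2) * ‖x‖ ^ (a/2 - 1)) • x‖ ^ (2/a - 1)) •
      (((2/a) ^ ((1:ℝ)/2) * ‖x‖ ^ (a/2 - 1)) • x) = x := by
    rw [hny, smul_smul, scalar_one a ‖x‖ ha hs, one_smul]
  rw [hφy] at key
  rw [hny] at key
  have hE : (fderiv ℝ f x) x = euler f x := by
    simp only [euler, pd]
    exact clm_sum _ x
  simp only [PiLp.smul_apply, smul_eq_mul, map_smul, hE] at key
  show _ = (a / 2) ^ ((b - 1) / 2) * (‖x‖ ^ (-(a * b) / 2) *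
    pd i (Pop a b f) (((2 / a) ^ ((1 : ℝ) / 2) * ‖x‖ ^ (a / 2 - 1)) • x))
  rw [key]
  linear_combination (-(pd i f x)) * coeff1 a b ‖x‖ ha hs
    - (b * x i * f x) * coeff2 a b ‖x‖ ha hs
    - ((2/a - 1) * x i * euler f x) * coeff3 a b ‖x‖ ha hs
end
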